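/- arXiv:2103.00888 — 8 statements merged into one kernel-verified Lean document; each statement's English description precedes it below -/
import Mathlib

section
/- For every l ∈ H', the solution operator 𝒮 : ℝ^n_+ → H, 𝒮(σ) := u_σ^l, is infinitely often Fréchet differentiable on the open set ℝ^n_+ (i.e., it is C^∞ on ℝ^n_+). -/
open scoped BigOperators
open RealInnerProductSpace InnerProductSpace

/-- For every `l ∈ H'`, the solution operator `𝒮 : ℝ^n_+ → H`,
`𝒮(σ) := u_σ^l`, is infinitely often Fréchet differentiable on the open set
`ℝ^n_+` (i.e., it is `C^∞` on `ℝ^n_+`). -/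
theorem stmt_2
    {H : Type*} [NormedAddCommGroup H] [InnerProductSpace ℝ H] [CompleteSpace H]
    {n : ℕ}
    (b0 : H →L[ℝ] H →L[ℝ] ℝ) (b : Fin n → H →L[ℝ] H →L[ℝ] ℝ)
    (hb0symm : ∀ u v : H, b0 u v = b0 v u)
    (hb0pos : ∀ v : H, 0 ≤ b0 v v)
    (hbsymm : ∀ i, ∀ u v : H, b i u v = b i v u)
    (hbpos : ∀ i, ∀ v : H, 0 ≤ b i v v)
    (C β : ℝ) (hβ : 0 < β) (hCβ : β ≤ C)
    (hcoer : ∀ v : H, β * ‖v‖ ^ 2 ≤ b0 v v + ∑ i, b i v v)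
    (hbound : ∀ v : H, b0 v v + ∑ i, b i v v ≤ C * ‖v‖ ^ 2)
    (l : H →L[ℝ] ℝ) (S : (Fin n → ℝ) → H)
    (hS : ∀ σ : Fin n → ℝ, (∀ i, 0 < σ i) →
      ∀ v : H, b0 (S σ) v + ∑ i, σ i * b i (S σ) v = l v) :
    ContDiffOn ℝ (⊤ : ℕ∞) S {σ : Fin n → ℝ | ∀ i, 0 < σ i} := by
  classical
  set A0 : H →L[ℝ] H := continuousLinearMapOfBilin b0 with hA0
  set A : Fin n → H →L[ℝ] H := fun i => continuousLinearMapOfBilin (b i) with hA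
  set T : (Fin n → ℝ) → (H →L[ℝ] H) := fun σ => A0 + ∑ i, σ i • A i with hT
  have hTinner : ∀ σ : Fin n → ℝ, ∀ u v : H,
      ⟪T σ u, v⟫_ℝ = b0 u v + ∑ i, σ i * b i u v := by
    intro σ u v
    simp only [hT, ContinuousLinearMap.add_apply, ContinuousLinearMap.sum_apply,
      ContinuousLinearMap.smul_apply, inner_add_left, sum_inner, real_inner_smul_left]
    rw [continuousLinearMapOfBilin_apply]
    congr 1
    refine Finset.sum_congr rfl fun i _ => ?_
    rw [continuousLinearMapOfBilin_apply]
  set y : H := (InnerProductSpace.toDual ℝ H).symm l with hy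
  have hyv : ∀ v : H, ⟪y, v⟫_ℝ = l v := fun v => InnerProductSpace.toDual_symm_apply
  -- invertibility of T σ on the positive orthant
  have hunit : ∀ σ : Fin n → ℝ, (∀ i, 0 < σ i) → IsUnit (T σ) := by
    intro σ hσ
    set Bσ : H →L[ℝ] H →L[ℝ] ℝ := b0 + ∑ i, σ i • b i with hBσ
    have hBσapp : ∀ u v : H, Bσ u v = b0 u v + ∑ i, σ i * b i u v := by
      intro u v
      simp [hBσ]
    -- coercivity constant
    set s : Finset ℝ := insert (1:ℝ) (Finset.image σ Finset.univ) with hs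
    have hsne : s.Nonempty := ⟨1, Finset.mem_insert_self _ _⟩
    set c : ℝ := s.min' hsne with hc
    have hc1 : c ≤ 1 := Finset.min'_le _ _ (Finset.mem_insert_self _ _)
    have hcσ : ∀ i, c ≤ σ i := fun i =>
      Finset.min'_le _ _ (Finset.mem_insert_of_mem (Finset.mem_image_of_mem σ (Finset.mem_univ i)))
    have hcpos : 0 < c := by
      have := Finset.min'_mem s hsne
      rw [← hc] at this
      rcases Finset.mem_insert.mp this with h | h
      · rw [h]; norm_num
      · obtain ⟨i, -, hi⟩ := Finset.mem_image.mp h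
        rw [← hi]; exact hσ i
    have hcoerB : IsCoercive Bσ := by
      refine ⟨c * β, by positivity, fun u => ?_⟩
      have h1 : c * (b0 u u + ∑ i, b i u u) ≤ Bσ u u := by
        rw [hBσapp, mul_add]
        refine add_le_add ?_ ?_
        · nlinarith [hb0pos u]
        · rw [Finset.mul_sum]
          refine Finset.sum_le_sum fun i _ => ?_
          exact mul_le_mul_of_nonneg_right (hcσ i) (hbpos i u)
      have h2 : c * (β * ‖u‖ ^ 2) ≤ c * (b0 u u + ∑ i, b i u u) :=
        mul_le_mul_of_nonneg_left (hcoer u) hcpos.le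
      calc c * β * ‖u‖ * ‖u‖ = c * (β * ‖u‖ ^ 2) := by ring
        _ ≤ Bσ u u := h2.trans h1
    have hTeq : T σ = (hcoerB.continuousLinearEquivOfBilin : H →L[ℝ] H) := by
      ext u
      refine ext_inner_right ℝ fun v => ?_
      rw [hTinner, ContinuousLinearEquiv.coe_coe, hcoerB.continuousLinearEquivOfBilin_apply,
        hBσapp]
    rw [hTeq]
    exact ⟨(ContinuousLinearEquiv.unitsEquiv ℝ H).symm hcoerB.continuousLinearEquivOfBilin, rfl⟩
  -- the smooth function
  set f : (Fin n → ℝ) → H := fun σ => (Ring.inverse (T σ)) y with hf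
  have hTsmooth : ContDiff ℝ (⊤ : ℕ∞) T := by
    refine contDiff_const.add (ContDiff.sum fun i _ => ?_)
    exact ((ContinuousLinearMap.proj i : (Fin n → ℝ) →L[ℝ] ℝ).contDiff).smul contDiff_const
  have hfsmooth : ContDiffOn ℝ (⊤ : ℕ∞) f {σ : Fin n → ℝ | ∀ i, 0 < σ i} := by
    intro σ hσ
    have h1 : ContDiffAt ℝ (⊤ : ℕ∞) (fun g : H →L[ℝ] H => Ring.inverse g y) (T σ) := by
      have := contDiffAt_ringInverse (n := (⊤ : ℕ∞)) ℝ (hunit σ hσ).unit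
      rw [(hunit σ hσ).unit_spec] at this
      exact ((ContinuousLinearMap.apply ℝ H y).contDiff.contDiffAt).comp _ this
    exact (h1.comp σ hTsmooth.contDiffAt).contDiffWithinAt
  refine hfsmooth.congr fun σ hσ => ?_
  -- S σ = f σ
  have hTS : T σ (S σ) = y := by
    refine ext_inner_right ℝ fun v => ?_
    rw [hTinner, hS σ hσ v, hyv]
  obtain ⟨u, hu⟩ := hunit σ hσ
  show S σ = Ring.inverse (T σ) y
  rw [← hTS, ← hu, Ring.inverse_unit]
  symm
  calc (↑u⁻¹ : H →L[ℝ] H) ((↑u : H →L[ℝ] H) (S σ)) = ((↑u⁻¹ * ↑u : H →L[ℝ] H)) (S σ) := rfl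
    _ = S σ := by rw [u.inv_mul]; rfl
end

section
/- For every l ∈ H' the solution operator 𝒮 : ℝ^n_+ → H, 𝒮(σ) := u_σ^l, is Fréchet differentiable at every σ ∈ ℝ^n_+, and its derivative 𝒮'(σ) ∈ L(ℝ^n, H) is characterized as follows: for every τ ∈ ℝ^n, the element 𝒮'(σ)τ ∈ H is the unique solution of b_σ(𝒮'(σ)τ, w) = −Σ_{i=1}^n τ_i b_i(u_σ^l, w) for all w ∈ H. -/
/-!
Through the Riesz isomorphism, `b_σ` becomes the operator `A σ = b₀♯ + ∑ σᵢ • bᵢ♯`, which is affine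
in `σ` and, for `σ > 0`, invertible by Lax–Milgram, since `b_σ` dominates `min (1, minᵢ σᵢ) • b_𝟙`.
Hence `𝒮 σ = (A σ)⁻¹ y` near `σ`, with `y` the Riesz representative of `l`, and differentiating the
inverse gives `𝒮' σ τ = -(A σ)⁻¹ (A' τ (𝒮 σ))`, which is the variational equation of the claim.
-/

open InnerProductSpace ContinuousLinearMap Filter Topology
open scoped RealInnerProductSpace

section RingInverse

variable {𝕜 E F : Type*} [NontriviallyNormedField 𝕜] [NormedAddCommGroup E] [NormedSpace 𝕜 E]
  [NormedAddCommGroup F] [NormedSpace 𝕜 F]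

theorem IsUnit.eq_ringInverse_apply_iff {a : F →L[𝕜] F} (ha : IsUnit a) {x y : F} :
    x = Ring.inverse a y ↔ a x = y := by
  constructor
  · rintro rfl
    exact congr($(Ring.mul_inverse_cancel a ha) y)
  · rintro rfl
    exact congr($(Ring.inverse_mul_cancel a ha) x).symm

theorem HasFDerivAt.ringInverse_apply [CompleteSpace F] {A : E → F →L[𝕜] F}
    {A' : E →L[𝕜] F →L[𝕜] F} {σ : E} (hA : HasFDerivAt A A' σ) (hσ : IsUnit (A σ)) (y : F) :
    HasFDerivAt (fun s => Ring.inverse (A s) y)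
      (-(Ring.inverse (A σ)).comp ((apply 𝕜 F (Ring.inverse (A σ) y)).comp A')) σ := by
  obtain ⟨u, hu⟩ := hσ
  have h := (apply 𝕜 F y).hasFDerivAt.comp σ (hu ▸ hasFDerivAt_ringInverse u |>.comp σ hA)
  refine h.congr_fderiv ?_
  rw [← hu, Ring.inverse_unit]
  ext τ
  simp

end RingInverse

theorem hasFDerivAt_add_sum_smul {𝕜 ι M : Type*} [NontriviallyNormedField 𝕜] [Fintype ι]
    [NormedAddCommGroup M] [NormedSpace 𝕜 M] (T₀ : M) (T : ι → M) (σ : ι → 𝕜) :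
    HasFDerivAt (fun s : ι → 𝕜 => T₀ + ∑ i, s i • T i)
      (∑ i, (proj i : (ι → 𝕜) →L[𝕜] 𝕜).smulRight (T i)) σ := by
  have h := ((∑ i, (proj i : (ι → 𝕜) →L[𝕜] 𝕜).smulRight (T i)).hasFDerivAt (x := σ)).const_add T₀
  simpa [sum_apply] using h

theorem exists_pos_le_one_forall_le {ι : Type*} [Finite ι] {σ : ι → ℝ} (hσ : ∀ i, 0 < σ i) :
    ∃ m, 0 < m ∧ m ≤ 1 ∧ ∀ i, m ≤ σ i := by
  have h : ∀ᶠ m in 𝓝[>] (0 : ℝ), m ≤ 1 ∧ ∀ i, m ≤ σ i :=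
    nhdsWithin_le_nhds <| (eventually_le_nhds one_pos).and
      (eventually_all.2 fun i => eventually_le_nhds (hσ i))
  exact (h.and self_mem_nhdsWithin).exists.imp fun m ⟨⟨h1, hm⟩, h0⟩ => ⟨h0, h1, hm⟩

theorem IsCoercive.isUnit_continuousLinearMapOfBilin {H : Type*} [NormedAddCommGroup H]
    [InnerProductSpace ℝ H] [CompleteSpace H] {B : H →L[ℝ] H →L[ℝ] ℝ} (hB : IsCoercive B) :
    IsUnit (continuousLinearMapOfBilin B) :=
  ⟨hB.continuousLinearEquivOfBilin.toUnit, rfl⟩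

noncomputable section ParametrizedForm

variable {H ι : Type*} [NormedAddCommGroup H] [InnerProductSpace ℝ H] [Fintype ι]
  (b₀ : H →L[ℝ] H →L[ℝ] ℝ) (b : ι → H →L[ℝ] H →L[ℝ] ℝ)

local postfix:1024 "♯" => continuousLinearMapOfBilin

theorem isCoercive_add_sum_smul (hb₀ : ∀ v, 0 ≤ b₀ v v) (hb : ∀ i v, 0 ≤ b i v v) {β : ℝ}
    (hβ : 0 < β) (hcoer : ∀ v, β * ‖v‖ ^ 2 ≤ b₀ v v + ∑ i, b i v v) {σ : ι → ℝ}
    (hσ : ∀ i, 0 < σ i) : IsCoercive (b₀ + ∑ i, σ i • b i) := by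
  obtain ⟨m, hm₀, hm₁, hmσ⟩ := exists_pos_le_one_forall_le hσ
  refine ⟨m * β, by positivity, fun v => ?_⟩
  have hdom : m * (b₀ v v + ∑ i, b i v v) ≤ b₀ v v + ∑ i, σ i * b i v v := by
    rw [mul_add, Finset.mul_sum]
    exact add_le_add (mul_le_of_le_one_left (hb₀ v) hm₁)
      (Finset.sum_le_sum fun i _ => mul_le_mul_of_nonneg_right (hmσ i) (hb i v))
  calc m * β * ‖v‖ * ‖v‖ = m * (β * ‖v‖ ^ 2) := by ring
    _ ≤ m * (b₀ v v + ∑ i, b i v v) := by gcongr; exact hcoer v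
    _ ≤ _ := by simpa [sum_apply] using hdom

variable [CompleteSpace H]

def formOperator (σ : ι → ℝ) : H →L[ℝ] H := (b₀ + ∑ i, σ i • b i)♯

def formOperatorDeriv : (ι → ℝ) →L[ℝ] H →L[ℝ] H :=
  ∑ i, (proj i : (ι → ℝ) →L[ℝ] ℝ).smulRight (b i)♯

theorem inner_formOperator_apply (σ : ι → ℝ) (u v : H) :
    ⟪formOperator b₀ b σ u, v⟫ = b₀ u v + ∑ i, σ i * b i u v := by
  simp [formOperator, sum_apply]

theorem inner_formOperatorDeriv_apply (τ : ι → ℝ) (u v : H) :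
    ⟪formOperatorDeriv b τ u, v⟫ = ∑ i, τ i * b i u v := by
  simp [formOperatorDeriv, sum_apply, sum_inner, real_inner_smul_left]

theorem formOperator_eq_add_sum (σ : ι → ℝ) : formOperator b₀ b σ = b₀♯ + ∑ i, σ i • (b i)♯ := by
  ext u
  refine ext_inner_right ℝ fun v => ?_
  simp [inner_formOperator_apply, sum_apply, inner_add_left, sum_inner, real_inner_smul_left]

theorem hasFDerivAt_formOperator (σ : ι → ℝ) :
    HasFDerivAt (formOperator b₀ b) (formOperatorDeriv b) σ := by
  rw [funext (formOperator_eq_add_sum b₀ b)]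
  exact hasFDerivAt_add_sum_smul b₀♯ (fun i => (b i)♯) σ

theorem eq_ringInverse_formOperator_apply_iff {σ : ι → ℝ} (hσ : IsUnit (formOperator b₀ b σ))
    {x y : H} :
    x = Ring.inverse (formOperator b₀ b σ) y ↔ ∀ v, b₀ x v + ∑ i, σ i * b i x v = ⟪y, v⟫ := by
  rw [hσ.eq_ringInverse_apply_iff]
  simp only [← inner_formOperator_apply]
  exact ⟨fun h v => h ▸ rfl, fun h => ext_inner_right ℝ h⟩

theorem isUnit_formOperator (hb₀ : ∀ v, 0 ≤ b₀ v v) (hb : ∀ i v, 0 ≤ b i v v)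
    {β : ℝ} (hβ : 0 < β) (hcoer : ∀ v, β * ‖v‖ ^ 2 ≤ b₀ v v + ∑ i, b i v v) {σ : ι → ℝ}
    (hσ : ∀ i, 0 < σ i) : IsUnit (formOperator b₀ b σ) :=
  (isCoercive_add_sum_smul b₀ b hb₀ hb hβ hcoer hσ).isUnit_continuousLinearMapOfBilin

end ParametrizedForm

theorem stmt_3_general
    {H : Type*} [NormedAddCommGroup H] [InnerProductSpace ℝ H] [CompleteSpace H]
    {n : ℕ}
    (b0 : H →L[ℝ] H →L[ℝ] ℝ) (b : Fin n → H →L[ℝ] H →L[ℝ] ℝ)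
    (hb0pos : ∀ v : H, 0 ≤ b0 v v)
    (hbpos : ∀ i, ∀ v : H, 0 ≤ b i v v)
    (β : ℝ) (hβ : 0 < β)
    (hcoer : ∀ v : H, β * ‖v‖ ^ 2 ≤ b0 v v + ∑ i, b i v v)
    (l : H →L[ℝ] ℝ) (S : (Fin n → ℝ) → H)
    (hS : ∀ σ : Fin n → ℝ, (∀ i, 0 < σ i) →
      ∀ v : H, b0 (S σ) v + ∑ i, σ i * b i (S σ) v = l v) :
    ∀ σ : Fin n → ℝ, (∀ i, 0 < σ i) →
      ∃ S' : (Fin n → ℝ) →L[ℝ] H, HasFDerivAt S S' σ ∧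
        ∀ τ : Fin n → ℝ, ∀ x : H,
          ((∀ w : H, b0 x w + ∑ i, σ i * b i x w =
              -(∑ i, τ i * b i (S σ) w)) ↔ x = S' τ) := by
  intro σ hσ
  set y := (toDual ℝ H).symm l
  have hunit : ∀ s : Fin n → ℝ, (∀ i, 0 < s i) → IsUnit (formOperator b0 b s) :=
    fun s hs => isUnit_formOperator b0 b hb0pos hbpos hβ hcoer hs
  have hS_eq : ∀ s : Fin n → ℝ, (∀ i, 0 < s i) → S s = Ring.inverse (formOperator b0 b s) y :=
    fun s hs => (eq_ringInverse_formOperator_apply_iff b0 b (hunit s hs)).2 fun v => by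
      rw [hS s hs, toDual_symm_apply]
  have hpos : ∀ᶠ s in 𝓝 σ, ∀ i, 0 < s i := eventually_all.2 fun i =>
    continuousAt_const.eventually_lt (continuous_apply i).continuousAt (hσ i)
  have hderiv := ((hasFDerivAt_formOperator b0 b σ).ringInverse_apply (hunit σ hσ) y)
    |>.congr_of_eventuallyEq (hpos.mono hS_eq)
  refine ⟨_, hderiv, fun τ x => ?_⟩
  rw [← hS_eq σ hσ, neg_apply, comp_apply, comp_apply, apply_apply, ← map_neg,
    eq_ringInverse_formOperator_apply_iff b0 b (hunit σ hσ)]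
  simp only [inner_neg_left, inner_formOperatorDeriv_apply]

/-- For every `l ∈ H'` the solution operator `𝒮(σ) := u_σ^l` is
Fréchet differentiable at every `σ ∈ ℝ^n_+`, and its derivative
`𝒮'(σ) ∈ L(ℝ^n, H)` is characterized as follows: for every `τ ∈ ℝ^n`,
the element `𝒮'(σ)τ ∈ H` is the unique solution of
`b_σ(𝒮'(σ)τ, w) = −Σ_i τ_i b_i(u_σ^l, w)` for all `w ∈ H`. -/
theorem stmt_3
    {H : Type*} [NormedAddCommGroup H] [InnerProductSpace ℝ H] [CompleteSpace H]
    {n : ℕ}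
    (b0 : H →L[ℝ] H →L[ℝ] ℝ) (b : Fin n → H →L[ℝ] H →L[ℝ] ℝ)
    (hb0symm : ∀ u v : H, b0 u v = b0 v u)
    (hb0pos : ∀ v : H, 0 ≤ b0 v v)
    (hbsymm : ∀ i, ∀ u v : H, b i u v = b i v u)
    (hbpos : ∀ i, ∀ v : H, 0 ≤ b i v v)
    (C β : ℝ) (hβ : 0 < β) (hCβ : β ≤ C)
    (hcoer : ∀ v : H, β * ‖v‖ ^ 2 ≤ b0 v v + ∑ i, b i v v)
    (hbound : ∀ v : H, b0 v v + ∑ i, b i v v ≤ C * ‖v‖ ^ 2)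
    (l : H →L[ℝ] ℝ) (S : (Fin n → ℝ) → H)
    (hS : ∀ σ : Fin n → ℝ, (∀ i, 0 < σ i) →
      ∀ v : H, b0 (S σ) v + ∑ i, σ i * b i (S σ) v = l v) :
    ∀ σ : Fin n → ℝ, (∀ i, 0 < σ i) →
      ∃ S' : (Fin n → ℝ) →L[ℝ] H, HasFDerivAt S S' σ ∧
        ∀ τ : Fin n → ℝ, ∀ x : H,
          ((∀ w : H, b0 x w + ∑ i, σ i * b i x w =
              -(∑ i, τ i * b i (S σ) w)) ↔ x = S' τ) :=
  stmt_3_general b0 b hb0pos hbpos β hβ hcoer l S hS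
end

section
/- For all l, r ∈ H', all σ ∈ ℝ^n_+ and all τ ∈ ℝ^n, the Fréchet derivative 𝒮'(σ) of the solution operator 𝒮(σ) := u_σ^l satisfies r(𝒮'(σ)τ) = −Σ_{i=1}^n τ_i b_i(u_σ^l, u_σ^r). -/
open scoped BigOperators Topology

/-! Differentiating the identity `b_σ'(u_σ'^l, ·) = l`, which holds for every `σ'` near `σ`,
at `σ` in the direction `τ` gives `b_σ(𝒮'(σ)τ, ·) = -Σ τ_i b_i(u_σ^l, ·)`; testing with `u_σ^r`
and using the symmetry of `b_σ` turns the left side into `r(𝒮'(σ)τ)`. -/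

section ImplicitDerivative

variable {𝕜 E F G : Type*} [NontriviallyNormedField 𝕜]
  [NormedAddCommGroup E] [NormedSpace 𝕜 E] [NormedAddCommGroup F] [NormedSpace 𝕜 F]
  [NormedAddCommGroup G] [NormedSpace 𝕜 G]

theorem HasFDerivAt.clm_apply_eq_neg_of_eventually_const
    {A : E → F →L[𝕜] G} {A' : E →L[𝕜] F →L[𝕜] G} {x : E → F} {x' : E →L[𝕜] F}
    {σ : E} {g : G}
    (hA : HasFDerivAt A A' σ) (hx : HasFDerivAt x x' σ)
    (hconst : ∀ᶠ σ' in 𝓝 σ, A σ' (x σ') = g) (τ : E) :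
    A σ (x' τ) = -A' τ (x σ) := by
  have hzero : HasFDerivAt (fun σ' => A σ' (x σ')) (0 : E →L[𝕜] G) σ :=
    (hasFDerivAt_const g σ).congr_of_eventuallyEq hconst
  have hderiv := (hA.clm_apply hx).unique hzero
  exact eq_neg_of_add_eq_zero_left (congrArg (· τ) hderiv)

theorem hasFDerivAt_add_sum_smul_s5 {ι : Type*} [Fintype ι] (v₀ : F) (v : ι → F)
    (σ : ι → 𝕜) :
    HasFDerivAt (fun σ' : ι → 𝕜 => v₀ + ∑ i, σ' i • v i)
      (∑ i, (ContinuousLinearMap.proj (R := 𝕜) (φ := fun _ : ι => 𝕜) i).smulRight (v i)) σ :=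
  (HasFDerivAt.fun_sum fun i _ => (hasFDerivAt_apply i σ).smul_const (v i)).const_add v₀

end ImplicitDerivative

theorem stmt_5_general
    {H : Type*} [NormedAddCommGroup H] [InnerProductSpace ℝ H]
    {n : ℕ}
    (b0 : H →L[ℝ] H →L[ℝ] ℝ) (b : Fin n → H →L[ℝ] H →L[ℝ] ℝ)
    (hb0symm : ∀ u v : H, b0 u v = b0 v u)
    (hbsymm : ∀ i, ∀ u v : H, b i u v = b i v u)
    (u : (Fin n → ℝ) → (H →L[ℝ] ℝ) → H)
    (hu : ∀ σ : Fin n → ℝ, (∀ i, 0 < σ i) → ∀ l : H →L[ℝ] ℝ,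
      ∀ v : H, b0 (u σ l) v + ∑ i, σ i * b i (u σ l) v = l v) :
    ∀ l r : H →L[ℝ] ℝ, ∀ σ : Fin n → ℝ, (∀ i, 0 < σ i) →
      ∀ S' : (Fin n → ℝ) →L[ℝ] H, HasFDerivAt (fun σ' => u σ' l) S' σ →
        ∀ τ : Fin n → ℝ,
          r (S' τ) = -(∑ i, τ i * b i (u σ l) (u σ r)) := by
  intro l r σ hσ S' hS' τ
  let bσ : (Fin n → ℝ) → H →L[ℝ] H →L[ℝ] ℝ := fun σ' => b0 + ∑ i, σ' i • b i
  have hsolve : ∀ σ', (∀ i, 0 < σ' i) → ∀ l, bσ σ' (u σ' l) = l := fun σ' hσ' l => by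
    ext v
    simpa [bσ] using hu σ' hσ' l v
  have hpos : ∀ᶠ σ' in 𝓝 σ, ∀ i, 0 < σ' i := Filter.eventually_all.2 fun i =>
    (isOpen_lt continuous_const (continuous_apply i)).mem_nhds (hσ i)
  have hderiv := (hasFDerivAt_add_sum_smul_s5 b0 b σ).clm_apply_eq_neg_of_eventually_const hS'
    (hpos.mono fun σ' hσ' => hsolve σ' hσ' l) τ
  have hsymm : ∀ v w, bσ σ v w = bσ σ w v := fun v w => by
    simp [bσ, hb0symm v, hbsymm _ v]
  have hr : r (S' τ) = bσ σ (S' τ) (u σ r) := by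
    rw [hsymm, hsolve σ hσ r]
  rw [hr, hderiv]
  simp

/-- For all `l, r ∈ H'`, all `σ ∈ ℝ^n_+` and all `τ ∈ ℝ^n`, the
Fréchet derivative `𝒮'(σ)` of the solution operator `𝒮(σ) := u_σ^l` satisfies
`r(𝒮'(σ)τ) = −Σ_i τ_i b_i(u_σ^l, u_σ^r)`. -/
theorem stmt_5
    {H : Type*} [NormedAddCommGroup H] [InnerProductSpace ℝ H] [CompleteSpace H]
    {n : ℕ}
    (b0 : H →L[ℝ] H →L[ℝ] ℝ) (b : Fin n → H →L[ℝ] H →L[ℝ] ℝ)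
    (hb0symm : ∀ u v : H, b0 u v = b0 v u)
    (hb0pos : ∀ v : H, 0 ≤ b0 v v)
    (hbsymm : ∀ i, ∀ u v : H, b i u v = b i v u)
    (hbpos : ∀ i, ∀ v : H, 0 ≤ b i v v)
    (C β : ℝ) (hβ : 0 < β) (hCβ : β ≤ C)
    (hcoer : ∀ v : H, β * ‖v‖ ^ 2 ≤ b0 v v + ∑ i, b i v v)
    (hbound : ∀ v : H, b0 v v + ∑ i, b i v v ≤ C * ‖v‖ ^ 2)
    (u : (Fin n → ℝ) → (H →L[ℝ] ℝ) → H)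
    (hu : ∀ σ : Fin n → ℝ, (∀ i, 0 < σ i) → ∀ l : H →L[ℝ] ℝ,
      ∀ v : H, b0 (u σ l) v + ∑ i, σ i * b i (u σ l) v = l v) :
    ∀ l r : H →L[ℝ] ℝ, ∀ σ : Fin n → ℝ, (∀ i, 0 < σ i) →
      ∀ S' : (Fin n → ℝ) →L[ℝ] H, HasFDerivAt (fun σ' => u σ' l) S' σ →
        ∀ τ : Fin n → ℝ,
          r (S' τ) = -(∑ i, τ i * b i (u σ l) (u σ r)) :=
  stmt_5_general b0 b hb0symm hbsymm u hu
end

section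
/- For all l, r ∈ H', the scalar map 𝓕_{l,r} : ℝ^n_+ → ℝ defined by 𝓕_{l,r}(σ) := r(u_σ^l) satisfies 𝓕_{l,r}(σ) = b_σ(u_σ^l, u_σ^r) for all σ ∈ ℝ^n_+; moreover 𝓕_{l,r} is infinitely often differentiable on ℝ^n_+ and its first partial derivatives are given by ∂𝓕_{l,r}(σ)/∂σ_i = −b_i(u_σ^l, u_σ^r) for i = 1,…,n. -/
open scoped BigOperators

open scoped RealInnerProductSpace

set_option synthInstance.maxHeartbeats 1000000 in
set_option maxHeartbeats 1000000 in
/-- For all `l, r ∈ H'`, the scalar map `𝓕_{l,r}(σ) := r(u_σ^l)`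
satisfies `𝓕_{l,r}(σ) = b_σ(u_σ^l, u_σ^r)` for all `σ ∈ ℝ^n_+`; moreover
`𝓕_{l,r}` is infinitely often differentiable on `ℝ^n_+` and its first partial
derivatives are given by `∂𝓕_{l,r}(σ)/∂σ_i = −b_i(u_σ^l, u_σ^r)`. -/
theorem stmt_6
    {H : Type*} [NormedAddCommGroup H] [InnerProductSpace ℝ H] [CompleteSpace H]
    {n : ℕ}
    (b0 : H →L[ℝ] H →L[ℝ] ℝ) (b : Fin n → H →L[ℝ] H →L[ℝ] ℝ)
    (hb0symm : ∀ u v : H, b0 u v = b0 v u)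
    (hb0pos : ∀ v : H, 0 ≤ b0 v v)
    (hbsymm : ∀ i, ∀ u v : H, b i u v = b i v u)
    (hbpos : ∀ i, ∀ v : H, 0 ≤ b i v v)
    (C β : ℝ) (hβ : 0 < β) (hCβ : β ≤ C)
    (hcoer : ∀ v : H, β * ‖v‖ ^ 2 ≤ b0 v v + ∑ i, b i v v)
    (hbound : ∀ v : H, b0 v v + ∑ i, b i v v ≤ C * ‖v‖ ^ 2)
    (u : (Fin n → ℝ) → (H →L[ℝ] ℝ) → H)
    (hu : ∀ σ : Fin n → ℝ, (∀ i, 0 < σ i) → ∀ l : H →L[ℝ] ℝ,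
      ∀ v : H, b0 (u σ l) v + ∑ i, σ i * b i (u σ l) v = l v) :
    ∀ l r : H →L[ℝ] ℝ,
      (∀ σ : Fin n → ℝ, (∀ i, 0 < σ i) →
        r (u σ l) = b0 (u σ l) (u σ r) + ∑ i, σ i * b i (u σ l) (u σ r)) ∧
      ContDiffOn ℝ (⊤ : ℕ∞) (fun σ => r (u σ l)) {σ : Fin n → ℝ | ∀ i, 0 < σ i} ∧
      (∀ σ : Fin n → ℝ, (∀ i, 0 < σ i) →
        ∃ DF : (Fin n → ℝ) →L[ℝ] ℝ,
          HasFDerivAt (fun σ' => r (u σ' l)) DF σ ∧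
          ∀ i : Fin n, DF (Pi.single i 1) = -(b i (u σ l) (u σ r))) := by
  classical
  intro l r
  -- sharp operators
  set S0 : H →L[ℝ] H := InnerProductSpace.continuousLinearMapOfBilin b0 with hS0def
  set Sb : Fin n → H →L[ℝ] H :=
    fun i => InnerProductSpace.continuousLinearMapOfBilin (b i) with hSbdef
  set T : (Fin n → ℝ) → H →L[ℝ] H := fun σ => S0 + ∑ i, σ i • Sb i with hTdef
  have hTinner : ∀ (σ : Fin n → ℝ) (x y : H),
      ⟪T σ x, y⟫ = b0 x y + ∑ i, σ i * b i x y := by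
    intro σ x y
    simp only [hTdef, ContinuousLinearMap.add_apply, ContinuousLinearMap.sum_apply,
      ContinuousLinearMap.smul_apply, sum_inner, inner_add_left, real_inner_smul_left,
      hS0def, hSbdef, InnerProductSpace.continuousLinearMapOfBilin_apply]
  have hTsym : ∀ (σ : Fin n → ℝ) (x y : H), ⟪T σ x, y⟫ = ⟪x, T σ y⟫ := by
    intro σ x y
    rw [hTinner σ x y, real_inner_comm, hTinner σ y x, hb0symm x y]
    congr 1
    exact Finset.sum_congr rfl fun i _ => by rw [hbsymm i x y]
  -- the bilinear forms
  set Bf : (Fin n → ℝ) → (H →L[ℝ] H →L[ℝ] ℝ) := fun σ => b0 + ∑ i, σ i • b i with hBfdef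
  have hBfapp : ∀ (σ : Fin n → ℝ) (x y : H), Bf σ x y = b0 x y + ∑ i, σ i * b i x y := by
    intro σ x y
    simp [hBfdef]
  -- positivity set
  set S : Set (Fin n → ℝ) := {σ : Fin n → ℝ | ∀ i, 0 < σ i} with hSdef
  -- coercivity on S
  have hKey : ∀ σ ∈ S, ∃ c : ℝ, 0 < c ∧ ∀ v : H, c * ‖v‖ * ‖v‖ ≤ Bf σ v v := by
    intro σ hσ
    set f : Option (Fin n) → ℝ := fun o => o.elim 1 σ with hfdef
    set m : ℝ := Finset.univ.inf' ⟨none, Finset.mem_univ none⟩ f with hmdef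
    have hm0 : 0 < m := by
      rw [hmdef]; refine (Finset.lt_inf'_iff _).2 ?_
      rintro (_ | i) _
      · exact one_pos
      · exact hσ i
    have hm1 : m ≤ 1 := Finset.inf'_le f (Finset.mem_univ none)
    have hmσ : ∀ i, m ≤ σ i := fun i => Finset.inf'_le f (Finset.mem_univ (some i))
    refine ⟨m * β, mul_pos hm0 hβ, fun v => ?_⟩
    rw [hBfapp]
    calc m * β * ‖v‖ * ‖v‖ = m * (β * ‖v‖ ^ 2) := by ring
      _ ≤ m * (b0 v v + ∑ i, b i v v) := by
          exact mul_le_mul_of_nonneg_left (hcoer v) hm0.le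
      _ = m * b0 v v + ∑ i, m * b i v v := by rw [mul_add, Finset.mul_sum]
      _ ≤ b0 v v + ∑ i, σ i * b i v v := by
          refine add_le_add (mul_le_of_le_one_left (hb0pos v) hm1) ?_
          exact Finset.sum_le_sum fun i _ =>
            mul_le_mul_of_nonneg_right (hmσ i) (hbpos i v)
  -- T σ is a unit on S
  have hunit : ∀ σ ∈ S, IsUnit (T σ) := by
    intro σ hσ
    obtain ⟨c, hc, hcoB⟩ := hKey σ hσ
    have hco : IsCoercive (Bf σ) := ⟨c, hc, hcoB⟩
    set E := hco.continuousLinearEquivOfBilin with hEdef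
    have hET : ∀ v : H, E v = T σ v := by
      intro v
      refine ext_inner_right ℝ fun w => ?_
      rw [hTinner, hEdef, IsCoercive.continuousLinearEquivOfBilin_apply, hBfapp]
    refine ⟨⟨T σ, E.symm.toContinuousLinearMap, ?_, ?_⟩, rfl⟩
    · ext x
      simp only [ContinuousLinearMap.mul_apply, ContinuousLinearMap.one_apply,
        ContinuousLinearEquiv.coe_coe, ← hET, E.apply_symm_apply]
    · ext x
      simp only [ContinuousLinearMap.mul_apply, ContinuousLinearMap.one_apply,
        ContinuousLinearEquiv.coe_coe, ← hET, E.symm_apply_apply]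
  -- Riesz representatives
  set Rl : H := (InnerProductSpace.toDual ℝ H).symm l with hRldef
  -- T σ maps the solution to the Riesz representative
  have hTu : ∀ σ ∈ S, ∀ l' : H →L[ℝ] ℝ,
      T σ (u σ l') = (InnerProductSpace.toDual ℝ H).symm l' := by
    intro σ hσ l'
    refine ext_inner_right ℝ fun w => ?_
    rw [hTinner, InnerProductSpace.toDual_symm_apply]
    exact hu σ hσ l' w
  -- u σ l' is given by inversion
  have hJl : ∀ σ ∈ S, ∀ w : H, Ring.inverse (T σ) (T σ w) = w := by
    intro σ hσ w
    have hU := hunit σ hσ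
    calc Ring.inverse (T σ) (T σ w)
        = (Ring.inverse (T σ) * T σ) w := (ContinuousLinearMap.mul_apply _ _ _).symm
      _ = w := by
          rw [← hU.unit_spec, Ring.inverse_unit, Units.inv_mul, ContinuousLinearMap.one_apply]
  have hJr : ∀ σ ∈ S, ∀ w : H, T σ (Ring.inverse (T σ) w) = w := by
    intro σ hσ w
    have hU := hunit σ hσ
    calc T σ (Ring.inverse (T σ) w)
        = (T σ * Ring.inverse (T σ)) w := (ContinuousLinearMap.mul_apply _ _ _).symm
      _ = w := by
          rw [← hU.unit_spec, Ring.inverse_unit, Units.mul_inv, ContinuousLinearMap.one_apply]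
  have huinv : ∀ σ ∈ S, ∀ l' : H →L[ℝ] ℝ,
      u σ l' = Ring.inverse (T σ) ((InnerProductSpace.toDual ℝ H).symm l') := by
    intro σ hσ l'
    rw [← hTu σ hσ l', hJl σ hσ]
  -- smooth surrogate
  set φ : (H →L[ℝ] H) →L[ℝ] ℝ := r.comp (ContinuousLinearMap.apply ℝ H Rl) with hφdef
  have hφapp : ∀ A : H →L[ℝ] H, φ A = r (A Rl) := fun A => rfl
  set G : (Fin n → ℝ) → ℝ := fun σ => φ (Ring.inverse (T σ)) with hGdef
  have hGu : ∀ σ ∈ S, r (u σ l) = G σ := by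
    intro σ hσ
    rw [hGdef]
    simp only [hφapp]
    rw [huinv σ hσ l, hRldef]
  -- derivative of T
  set DT : (Fin n → ℝ) →L[ℝ] (H →L[ℝ] H) :=
    ∑ i, (ContinuousLinearMap.proj i).smulRight (Sb i) with hDTdef
  have hDTapp : ∀ h : Fin n → ℝ, DT h = ∑ i, h i • Sb i := by
    intro h
    simp [hDTdef, ContinuousLinearMap.sum_apply, ContinuousLinearMap.smulRight_apply,
      ContinuousLinearMap.proj_apply]
  have hTaff : T = fun σ => S0 + DT σ := by
    funext σ
    rw [hDTapp, hTdef]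
  have hTderiv : ∀ σ : Fin n → ℝ, HasFDerivAt T DT σ := by
    intro σ
    rw [hTaff]
    exact DT.hasFDerivAt.const_add S0
  have hTcd : ContDiff ℝ (⊤ : ℕ∞) T := by
    rw [hTaff]
    exact contDiff_const.add DT.contDiff
  -- S is open
  have hSopen : IsOpen S := by
    have : S = Set.pi Set.univ fun _ : Fin n => Set.Ioi (0 : ℝ) := by
      ext σ; simp [hSdef, Set.mem_pi]
    rw [this]
    exact isOpen_set_pi Set.finite_univ fun i _ => isOpen_Ioi
  -- smoothness of G on S
  have hGsm : ∀ σ ∈ S, ContDiffAt ℝ (⊤ : ℕ∞) G σ := by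
    intro σ hσ
    have hU := hunit σ hσ
    have h2 : ContDiffAt ℝ (⊤ : ℕ∞) Ring.inverse (T σ) := by
      have := contDiffAt_ringInverse (𝕜 := ℝ) (n := (⊤ : ℕ∞)) hU.unit
      rwa [hU.unit_spec] at this
    exact (φ.contDiff.contDiffAt).comp σ (h2.comp σ hTcd.contDiffAt)
  refine ⟨?_, ?_, ?_⟩
  · -- part 1
    intro σ hσ
    rw [← hu σ hσ r (u σ l), hb0symm (u σ r) (u σ l)]
    congr 1
    exact Finset.sum_congr rfl fun i _ => by rw [hbsymm i (u σ r) (u σ l)]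
  · -- part 2
    exact ContDiffOn.congr (fun σ hσ => (hGsm σ hσ).contDiffWithinAt)
      (fun σ hσ => hGu σ hσ)
  · -- part 3
    intro σ hσ
    have hU := hunit σ hσ
    set J : H →L[ℝ] H := Ring.inverse (T σ) with hJdef
    have hJu : J = (↑hU.unit⁻¹ : H →L[ℝ] H) := by
      rw [hJdef]
      conv_lhs => rw [← hU.unit_spec]
      exact Ring.inverse_unit hU.unit
    have hd2 : HasFDerivAt Ring.inverse
        (-(ContinuousLinearMap.mulLeftRight ℝ (H →L[ℝ] H) J J)) (T σ) := by
      have := hasFDerivAt_ringInverse (𝕜 := ℝ) hU.unit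
      rw [hU.unit_spec, ← hJu] at this
      exact this
    have hdG : HasFDerivAt G
        (φ.comp ((-(ContinuousLinearMap.mulLeftRight ℝ (H →L[ℝ] H) J J)).comp DT)) σ :=
      (φ.hasFDerivAt).comp σ (hd2.comp σ (hTderiv σ))
    refine ⟨φ.comp ((-(ContinuousLinearMap.mulLeftRight ℝ (H →L[ℝ] H) J J)).comp DT), ?_, ?_⟩
    · refine hdG.congr_of_eventuallyEq ?_
      filter_upwards [hSopen.mem_nhds hσ] with σ' hσ'
      exact hGu σ' hσ'
    · intro i
      have hDTe : DT (Pi.single i 1) = Sb i := by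
        rw [hDTapp]
        rw [Finset.sum_eq_single i]
        · simp
        · intro j _ hj
          simp [Pi.single_apply, hj]
        · simp
      simp only [ContinuousLinearMap.comp_apply, ContinuousLinearMap.coe_comp',
        Function.comp_apply, ContinuousLinearMap.apply_apply,
        ContinuousLinearMap.neg_apply, map_neg, hφdef]
      rw [hDTe, ContinuousLinearMap.mulLeftRight_apply]
      have hJRl : J Rl = u σ l := by
        rw [hRldef, hJdef]
        exact (huinv σ hσ l).symm
      have hw : (J * Sb i * J) Rl = J (Sb i (u σ l)) := by
        calc (J * Sb i * J) Rl = J (Sb i (J Rl)) := by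
              rw [ContinuousLinearMap.mul_apply, ContinuousLinearMap.mul_apply]
          _ = J (Sb i (u σ l)) := by rw [hJRl]
      rw [hw]
      congr 1
      -- r (J (Sb i (u σ l))) = b i (u σ l) (u σ r)
      have h1 : r (J (Sb i (u σ l))) = ⟪T σ (u σ r), J (Sb i (u σ l))⟫ := by
        rw [hTu σ hσ r, InnerProductSpace.toDual_symm_apply]
      rw [h1, hTsym σ (u σ r) (J (Sb i (u σ l))), hJdef, hJr σ hσ,
        real_inner_comm, hSbdef]
      exact InnerProductSpace.continuousLinearMapOfBilin_apply (b i) (u σ l) (u σ r)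
end

section
/- For every σ ∈ ℝ^n_+, the matrix 𝓕(σ) is positive semidefinite, i.e., gᵀ 𝓕(σ) g ≥ 0 for all g ∈ ℝ^m. -/
/-! With `w = ∑ₖ gₖ u_σ^{lₖ}`, bilinearity and the defining equations of the `u_σ^{lₖ}` turn
`gᵀ 𝓕(σ) g` into `b_σ(w, w)`, which is nonnegative since every `bᵢ` is positive semidefinite
and every `σᵢ > 0`. -/

open scoped BigOperators

section GramQuadraticForm

variable {𝕜 E : Type*} [NontriviallyNormedField 𝕜] [NormedAddCommGroup E] [NormedSpace 𝕜 E]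

theorem ContinuousLinearMap.apply_sum_smul_sum_smul {ι : Type*} (s : Finset ι)
    (B : E →L[𝕜] E →L[𝕜] 𝕜) (g : ι → 𝕜) (x : ι → E) :
    B (∑ k ∈ s, g k • x k) (∑ j ∈ s, g j • x j) =
      ∑ j ∈ s, ∑ k ∈ s, g j * B (x k) (x j) * g k := by
  simp only [map_sum, map_smul, FunLike.coe_sum, Finset.sum_apply,
    FunLike.coe_smul, Pi.smul_apply, smul_eq_mul, Finset.mul_sum]
  exact Finset.sum_congr rfl fun j _ => Finset.sum_congr rfl fun k _ => by ring

end GramQuadraticForm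

section WeightedForm

variable {E : Type*} [NormedAddCommGroup E] [NormedSpace ℝ E] {n : ℕ}

noncomputable def weightedForm (b0 : E →L[ℝ] E →L[ℝ] ℝ) (b : Fin n → E →L[ℝ] E →L[ℝ] ℝ) (σ : Fin n → ℝ) :
    E →L[ℝ] E →L[ℝ] ℝ :=
  b0 + ∑ i, σ i • b i

variable (b0 : E →L[ℝ] E →L[ℝ] ℝ) (b : Fin n → E →L[ℝ] E →L[ℝ] ℝ) (σ : Fin n → ℝ)

theorem weightedForm_apply (u v : E) :
    weightedForm b0 b σ u v = b0 u v + ∑ i, σ i * b i u v := by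
  simp [weightedForm]

theorem weightedForm_apply_self_nonneg (hb0pos : ∀ v, 0 ≤ b0 v v)
    (hbpos : ∀ i v, 0 ≤ b i v v) (hσ : ∀ i, 0 ≤ σ i) (v : E) :
    0 ≤ weightedForm b0 b σ v v := by
  rw [weightedForm_apply]
  exact add_nonneg (hb0pos v) (Finset.sum_nonneg fun i _ => mul_nonneg (hσ i) (hbpos i v))

end WeightedForm

theorem stmt_8_general
    {H : Type*} [NormedAddCommGroup H] [InnerProductSpace ℝ H]
    {n m : ℕ}
    (b0 : H →L[ℝ] H →L[ℝ] ℝ) (b : Fin n → H →L[ℝ] H →L[ℝ] ℝ)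
    (hb0pos : ∀ v : H, 0 ≤ b0 v v)
    (hbpos : ∀ i, ∀ v : H, 0 ≤ b i v v)
    (u : (Fin n → ℝ) → (H →L[ℝ] ℝ) → H)
    (hu : ∀ σ : Fin n → ℝ, (∀ i, 0 < σ i) → ∀ l : H →L[ℝ] ℝ,
      ∀ v : H, b0 (u σ l) v + ∑ i, σ i * b i (u σ l) v = l v)
    (l : Fin m → (H →L[ℝ] ℝ)) :
    ∀ σ : Fin n → ℝ, (∀ i, 0 < σ i) →
      ∀ g : Fin m → ℝ,
        0 ≤ ∑ j, ∑ k, g j * (l k (u σ (l j))) * g k := by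
  intro σ hσ g
  have entry : ∀ j k, l k (u σ (l j)) = weightedForm b0 b σ (u σ (l k)) (u σ (l j)) :=
    fun j k => by rw [weightedForm_apply, hu σ hσ]
  simp only [entry, ← ContinuousLinearMap.apply_sum_smul_sum_smul]
  exact weightedForm_apply_self_nonneg b0 b σ hb0pos hbpos (fun i => (hσ i).le) _

/-- For every `σ ∈ ℝ^n_+`, the matrix `𝓕(σ)` is positive
semidefinite, i.e., `gᵀ 𝓕(σ) g ≥ 0` for all `g ∈ ℝ^m`. -/
theorem stmt_8
    {H : Type*} [NormedAddCommGroup H] [InnerProductSpace ℝ H] [CompleteSpace H]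
    {n m : ℕ}
    (b0 : H →L[ℝ] H →L[ℝ] ℝ) (b : Fin n → H →L[ℝ] H →L[ℝ] ℝ)
    (hb0symm : ∀ u v : H, b0 u v = b0 v u)
    (hb0pos : ∀ v : H, 0 ≤ b0 v v)
    (hbsymm : ∀ i, ∀ u v : H, b i u v = b i v u)
    (hbpos : ∀ i, ∀ v : H, 0 ≤ b i v v)
    (C β : ℝ) (hβ : 0 < β) (hCβ : β ≤ C)
    (hcoer : ∀ v : H, β * ‖v‖ ^ 2 ≤ b0 v v + ∑ i, b i v v)
    (hbound : ∀ v : H, b0 v v + ∑ i, b i v v ≤ C * ‖v‖ ^ 2)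
    (u : (Fin n → ℝ) → (H →L[ℝ] ℝ) → H)
    (hu : ∀ σ : Fin n → ℝ, (∀ i, 0 < σ i) → ∀ l : H →L[ℝ] ℝ,
      ∀ v : H, b0 (u σ l) v + ∑ i, σ i * b i (u σ l) v = l v)
    (l : Fin m → (H →L[ℝ] ℝ)) :
    ∀ σ : Fin n → ℝ, (∀ i, 0 < σ i) →
      ∀ g : Fin m → ℝ,
        0 ≤ ∑ j, ∑ k, g j * (l k (u σ (l j))) * g k :=
  stmt_8_general b0 b hb0pos hbpos u hu l
end

section
/- If l_1,…,l_m ∈ H' are linearly independent, then for every σ ∈ ℝ^n_+ the matrix 𝓕(σ) is positive definite, i.e., gᵀ 𝓕(σ) g > 0 for all nonzero g ∈ ℝ^m. -/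
/-!
With `w := ∑ j, g j • u_σ^{l_j}`, the defining equations of the `u_σ^{l_j}` turn the quadratic
form `gᵀ 𝓕(σ) g` into `b_σ(w, w)`. For positive weights, `b_σ(w, w) = 0` forces every
`b_i(w, w)` to vanish, hence `b_𝟙(w, w) = 0` and `w = 0` by coercivity; but then
`∑ j, g j • l_j = b_σ(w, ·) = 0`, so `g = 0` by linear independence.
-/

section Representers

variable {E ι : Type*} [NormedAddCommGroup E] [NormedSpace ℝ E] [Fintype ι]
  (B : E →L[ℝ] E →L[ℝ] ℝ) {u : ι → E} {l : ι → E →L[ℝ] ℝ}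

theorem apply_sum_smul_eq_sum_smul (hu : ∀ j v, B (u j) v = l j v) (g : ι → ℝ) :
    B (∑ j, g j • u j) = ∑ j, g j • l j := by
  ext v
  simp [hu]

theorem sum_sum_mul_apply_mul_eq (hu : ∀ j v, B (u j) v = l j v) (g : ι → ℝ) :
    ∑ j, ∑ k, g j * l k (u j) * g k = B (∑ j, g j • u j) (∑ j, g j • u j) := by
  rw [apply_sum_smul_eq_sum_smul B hu g]
  simp only [sum_apply, smul_apply, map_sum, map_smul, smul_eq_mul, Finset.mul_sum]
  exact Finset.sum_congr rfl fun _ _ => Finset.sum_congr rfl fun _ _ => by ring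

theorem sum_sum_mul_apply_mul_pos (hB : ∀ w ≠ 0, 0 < B w w) (hu : ∀ j v, B (u j) v = l j v)
    (hli : LinearIndependent ℝ l) {g : ι → ℝ} (hg : g ≠ 0) :
    0 < ∑ j, ∑ k, g j * l k (u j) * g k := by
  rw [sum_sum_mul_apply_mul_eq B hu g]
  refine hB _ fun hw => hg ?_
  have hcomb : ∑ j, g j • l j = 0 := by
    rw [← apply_sum_smul_eq_sum_smul B hu g, hw, map_zero]
  exact funext (Fintype.linearIndependent_iff.mp hli g hcomb)

end Representers

theorem add_sum_smul_apply_self_pos {E : Type*} [NormedAddCommGroup E] [NormedSpace ℝ E]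
    {n : ℕ} {b0 : E →L[ℝ] E →L[ℝ] ℝ} {b : Fin n → E →L[ℝ] E →L[ℝ] ℝ}
    (hb0pos : ∀ v, 0 ≤ b0 v v) (hbpos : ∀ i v, 0 ≤ b i v v) {β : ℝ} (hβ : 0 < β)
    (hcoer : ∀ v, β * ‖v‖ ^ 2 ≤ b0 v v + ∑ i, b i v v) {σ : Fin n → ℝ} (hσ : ∀ i, 0 < σ i)
    {w : E} (hw : w ≠ 0) :
    0 < (b0 + ∑ i, σ i • b i) w w := by
  simp only [add_apply, sum_apply, smul_apply, smul_eq_mul]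
  by_contra! hle
  have hterms : ∀ i ∈ Finset.univ, 0 ≤ σ i * b i w w := fun i _ =>
    mul_nonneg (hσ i).le (hbpos i w)
  have hsum := Finset.sum_nonneg hterms
  have hb0 : b0 w w = 0 := by linarith [hb0pos w]
  have hweighted : ∀ i ∈ Finset.univ, σ i * b i w w = 0 :=
    (Finset.sum_eq_zero_iff_of_nonneg hterms).mp (by linarith [hb0pos w])
  have hbi : ∀ i, b i w w = 0 := fun i =>
    (mul_eq_zero.mp (hweighted i (Finset.mem_univ i))).resolve_left (hσ i).ne'
  have hcoer_w : β * ‖w‖ ^ 2 ≤ 0 := by simpa [hb0, hbi] using hcoer w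
  have : 0 < β * ‖w‖ ^ 2 := mul_pos hβ (pow_pos (norm_pos_iff.mpr hw) 2)
  linarith

theorem stmt_9_general
    {H : Type*} [NormedAddCommGroup H] [InnerProductSpace ℝ H]
    {n m : ℕ}
    (b0 : H →L[ℝ] H →L[ℝ] ℝ) (b : Fin n → H →L[ℝ] H →L[ℝ] ℝ)
    (hb0pos : ∀ v : H, 0 ≤ b0 v v)
    (hbpos : ∀ i, ∀ v : H, 0 ≤ b i v v)
    (β : ℝ) (hβ : 0 < β)
    (hcoer : ∀ v : H, β * ‖v‖ ^ 2 ≤ b0 v v + ∑ i, b i v v)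
    (u : (Fin n → ℝ) → (H →L[ℝ] ℝ) → H)
    (hu : ∀ σ : Fin n → ℝ, (∀ i, 0 < σ i) → ∀ l : H →L[ℝ] ℝ,
      ∀ v : H, b0 (u σ l) v + ∑ i, σ i * b i (u σ l) v = l v)
    (l : Fin m → (H →L[ℝ] ℝ))
    (hli : LinearIndependent ℝ l) :
    ∀ σ : Fin n → ℝ, (∀ i, 0 < σ i) →
      ∀ g : Fin m → ℝ, g ≠ 0 →
        0 < ∑ j, ∑ k, g j * (l k (u σ (l j))) * g k := by
  intro σ hσ g hg
  refine sum_sum_mul_apply_mul_pos (b0 + ∑ i, σ i • b i) (u := fun j => u σ (l j))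
    (fun w hw => add_sum_smul_apply_self_pos hb0pos hbpos hβ hcoer hσ hw)
    (fun j v => ?_) hli hg
  simpa using hu σ hσ (l j) v

/-- If `l_1,…,l_m ∈ H'` are linearly independent, then for every
`σ ∈ ℝ^n_+` the matrix `𝓕(σ)` is positive definite, i.e., `gᵀ 𝓕(σ) g > 0` for
all nonzero `g ∈ ℝ^m`. -/
theorem stmt_9
    {H : Type*} [NormedAddCommGroup H] [InnerProductSpace ℝ H] [CompleteSpace H]
    {n m : ℕ}
    (b0 : H →L[ℝ] H →L[ℝ] ℝ) (b : Fin n → H →L[ℝ] H →L[ℝ] ℝ)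
    (hb0symm : ∀ u v : H, b0 u v = b0 v u)
    (hb0pos : ∀ v : H, 0 ≤ b0 v v)
    (hbsymm : ∀ i, ∀ u v : H, b i u v = b i v u)
    (hbpos : ∀ i, ∀ v : H, 0 ≤ b i v v)
    (C β : ℝ) (hβ : 0 < β) (hCβ : β ≤ C)
    (hcoer : ∀ v : H, β * ‖v‖ ^ 2 ≤ b0 v v + ∑ i, b i v v)
    (hbound : ∀ v : H, b0 v v + ∑ i, b i v v ≤ C * ‖v‖ ^ 2)
    (u : (Fin n → ℝ) → (H →L[ℝ] ℝ) → H)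
    (hu : ∀ σ : Fin n → ℝ, (∀ i, 0 < σ i) → ∀ l : H →L[ℝ] ℝ,
      ∀ v : H, b0 (u σ l) v + ∑ i, σ i * b i (u σ l) v = l v)
    (l : Fin m → (H →L[ℝ] ℝ))
    (hli : LinearIndependent ℝ l) :
    ∀ σ : Fin n → ℝ, (∀ i, 0 < σ i) →
      ∀ g : Fin m → ℝ, g ≠ 0 →
        0 < ∑ j, ∑ k, g j * (l k (u σ (l j))) * g k :=
  stmt_9_general b0 b hb0pos hbpos β hβ hcoer u hu l hli
end

section
/- The map 𝓕 is convex in the Loewner order: for all σ, σ^{(0)} ∈ ℝ^n_+, the matrix 𝓕(σ) − 𝓕(σ^{(0)}) + E is positive semidefinite, where E ∈ ℝ^{m×m} is the matrix with entries E_{j,k} := Σ_{i=1}^n (σ_i − σ_i^{(0)}) b_i(u_{σ^{(0)}}^{l_j}, u_{σ^{(0)}}^{l_k}) (so that −E equals the derivative 𝓕'(σ^{(0)})(σ − σ^{(0)})). -/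
open scoped BigOperators Matrix

/-!
Expanding `b_σ(u_σ^{l_j} − u_{σ⁽⁰⁾}^{l_j}, u_σ^{l_k} − u_{σ⁽⁰⁾}^{l_k})` with the defining equations
of the solutions and the symmetry of `b_σ` gives exactly the `(j, k)` entry of
`𝓕(σ) − 𝓕(σ⁽⁰⁾) + E`. So that matrix is the Gram matrix of the vectors
`u_σ^{l_j} − u_{σ⁽⁰⁾}^{l_j}` for the symmetric positive semidefinite form `b_σ`.
-/

theorem Matrix.posSemidef_of_bilinear_gram {ι E : Type*} [Fintype ι] [AddCommGroup E]
    [Module ℝ E] [TopologicalSpace E] (B : E →L[ℝ] E →L[ℝ] ℝ) (hsymm : ∀ x y, B x y = B y x)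
    (hnonneg : ∀ x, 0 ≤ B x x) (w : ι → E) :
    (Matrix.of fun j k => B (w j) (w k)).PosSemidef := by
  refine .of_dotProduct_mulVec_nonneg ?_ fun g => ?_
  · ext j k
    exact hsymm (w k) (w j)
  · have hquad : star g ⬝ᵥ ((Matrix.of fun j k => B (w j) (w k)) *ᵥ g) =
        B (∑ j, g j • w j) (∑ k, g k • w k) := by
      simp only [dotProduct, Pi.star_apply, star_trivial, Matrix.mulVec, Matrix.of_apply,
        Finset.mul_sum, map_sum, map_smul, _root_.sum_apply,
        _root_.smul_apply, smul_eq_mul]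
      rw [Finset.sum_comm]
      exact Finset.sum_congr rfl fun _ _ => Finset.sum_congr rfl fun _ _ => by ring
    exact hquad ▸ hnonneg _

section ParamForm

variable {ι E : Type*} [Fintype ι] [AddCommGroup E] [Module ℝ E] [TopologicalSpace E]

noncomputable def paramForm (b0 : E →L[ℝ] E →L[ℝ] ℝ) (b : ι → E →L[ℝ] E →L[ℝ] ℝ) (σ : ι → ℝ) :
    E →L[ℝ] E →L[ℝ] ℝ :=
  b0 + ∑ i, σ i • b i

variable {b0 : E →L[ℝ] E →L[ℝ] ℝ} {b : ι → E →L[ℝ] E →L[ℝ] ℝ}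

@[simp]
theorem paramForm_apply (σ : ι → ℝ) (x y : E) :
    paramForm b0 b σ x y = b0 x y + ∑ i, σ i * b i x y := by
  simp [paramForm]

theorem paramForm_sub_paramForm_apply (σ σ₀ : ι → ℝ) (x y : E) :
    paramForm b0 b σ x y - paramForm b0 b σ₀ x y = ∑ i, (σ i - σ₀ i) * b i x y := by
  simp only [paramForm_apply, sub_mul, Finset.sum_sub_distrib]
  ring

theorem paramForm_comm (hb0 : ∀ x y, b0 x y = b0 y x) (hb : ∀ i x y, b i x y = b i y x)
    (σ : ι → ℝ) (x y : E) : paramForm b0 b σ x y = paramForm b0 b σ y x := by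
  simp only [paramForm_apply, hb0 x y, hb _ x y]

theorem paramForm_self_nonneg (hb0 : ∀ x, 0 ≤ b0 x x) (hb : ∀ i x, 0 ≤ b i x x)
    {σ : ι → ℝ} (hσ : ∀ i, 0 ≤ σ i) (x : E) : 0 ≤ paramForm b0 b σ x x := by
  rw [paramForm_apply]
  exact add_nonneg (hb0 x) (Finset.sum_nonneg fun i _ => mul_nonneg (hσ i) (hb i x))

end ParamForm

theorem apply_sub_apply_sub_of_solves {E : Type*} [AddCommGroup E] [Module ℝ E]
    [TopologicalSpace E] {B B₀ : E →L[ℝ] E →L[ℝ] ℝ} (hB : ∀ x y, B x y = B y x)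
    {lj lk : E →L[ℝ] ℝ} {xj xk yj yk : E} (hxj : ∀ v, B xj v = lj v) (hxk : ∀ v, B xk v = lk v)
    (hyj : ∀ v, B₀ yj v = lj v) :
    B (xj - yj) (xk - yk) = lk xj - lk yj + (B yj yk - B₀ yj yk) := by
  have hxjxk : B xj xk = lk xj := by rw [hB, hxk]
  have hyjxk : B yj xk = lk yj := by rw [hB, hxk]
  simp only [map_sub, sub_apply, hxjxk, hyjxk, hxj, hyj]
  ring

theorem stmt_12_general
    {H : Type*} [NormedAddCommGroup H] [InnerProductSpace ℝ H]
    {n m : ℕ}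
    (b0 : H →L[ℝ] H →L[ℝ] ℝ) (b : Fin n → H →L[ℝ] H →L[ℝ] ℝ)
    (hb0symm : ∀ u v : H, b0 u v = b0 v u)
    (hb0pos : ∀ v : H, 0 ≤ b0 v v)
    (hbsymm : ∀ i, ∀ u v : H, b i u v = b i v u)
    (hbpos : ∀ i, ∀ v : H, 0 ≤ b i v v)
    (u : (Fin n → ℝ) → (H →L[ℝ] ℝ) → H)
    (hu : ∀ σ : Fin n → ℝ, (∀ i, 0 < σ i) → ∀ l : H →L[ℝ] ℝ,
      ∀ v : H, b0 (u σ l) v + ∑ i, σ i * b i (u σ l) v = l v)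
    (l : Fin m → (H →L[ℝ] ℝ)) :
    ∀ σ σ₀ : Fin n → ℝ, (∀ i, 0 < σ i) → (∀ i, 0 < σ₀ i) →
      Matrix.PosSemidef
        (Matrix.of fun j k : Fin m =>
          l k (u σ (l j)) - l k (u σ₀ (l j)) +
            ∑ i, (σ i - σ₀ i) * b i (u σ₀ (l j)) (u σ₀ (l k))) := by
  intro σ σ₀ hσ hσ₀
  have hsolves : ∀ τ, (∀ i, 0 < τ i) → ∀ l v, paramForm b0 b τ (u τ l) v = l v :=
    fun τ hτ l v => (paramForm_apply τ _ v).trans (hu τ hτ l v)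
  have hcomm := paramForm_comm hb0symm hbsymm σ
  have hgram : (Matrix.of fun j k : Fin m =>
        l k (u σ (l j)) - l k (u σ₀ (l j)) +
          ∑ i, (σ i - σ₀ i) * b i (u σ₀ (l j)) (u σ₀ (l k))) =
      Matrix.of fun j k =>
        paramForm b0 b σ (u σ (l j) - u σ₀ (l j)) (u σ (l k) - u σ₀ (l k)) := by
    ext j k
    rw [Matrix.of_apply, Matrix.of_apply, apply_sub_apply_sub_of_solves hcomm
      (hsolves σ hσ (l j)) (hsolves σ hσ (l k)) (hsolves σ₀ hσ₀ (l j)),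
      paramForm_sub_paramForm_apply]
  rw [hgram]
  exact Matrix.posSemidef_of_bilinear_gram _ hcomm
    (paramForm_self_nonneg hb0pos hbpos fun i => (hσ i).le) _

/-- The map `𝓕` is convex in the Loewner order: for all
`σ, σ⁽⁰⁾ ∈ ℝ^n_+`, the matrix `𝓕(σ) − 𝓕(σ⁽⁰⁾) + E` is positive semidefinite,
where `E_{j,k} := Σ_i (σ_i − σ⁽⁰⁾_i) b_i(u_{σ⁽⁰⁾}^{l_j}, u_{σ⁽⁰⁾}^{l_k})`
(so that `−E` equals the derivative `𝓕'(σ⁽⁰⁾)(σ − σ⁽⁰⁾)`). -/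
theorem stmt_12
    {H : Type*} [NormedAddCommGroup H] [InnerProductSpace ℝ H] [CompleteSpace H]
    {n m : ℕ}
    (b0 : H →L[ℝ] H →L[ℝ] ℝ) (b : Fin n → H →L[ℝ] H →L[ℝ] ℝ)
    (hb0symm : ∀ u v : H, b0 u v = b0 v u)
    (hb0pos : ∀ v : H, 0 ≤ b0 v v)
    (hbsymm : ∀ i, ∀ u v : H, b i u v = b i v u)
    (hbpos : ∀ i, ∀ v : H, 0 ≤ b i v v)
    (C β : ℝ) (hβ : 0 < β) (hCβ : β ≤ C)
    (hcoer : ∀ v : H, β * ‖v‖ ^ 2 ≤ b0 v v + ∑ i, b i v v)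
    (hbound : ∀ v : H, b0 v v + ∑ i, b i v v ≤ C * ‖v‖ ^ 2)
    (u : (Fin n → ℝ) → (H →L[ℝ] ℝ) → H)
    (hu : ∀ σ : Fin n → ℝ, (∀ i, 0 < σ i) → ∀ l : H →L[ℝ] ℝ,
      ∀ v : H, b0 (u σ l) v + ∑ i, σ i * b i (u σ l) v = l v)
    (l : Fin m → (H →L[ℝ] ℝ)) :
    ∀ σ σ₀ : Fin n → ℝ, (∀ i, 0 < σ i) → (∀ i, 0 < σ₀ i) →
      Matrix.PosSemidef
        (Matrix.of fun j k : Fin m =>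
          l k (u σ (l j)) - l k (u σ₀ (l j)) +
            ∑ i, (σ i - σ₀ i) * b i (u σ₀ (l j)) (u σ₀ (l k))) :=
  stmt_12_general b0 b hb0symm hb0pos hbsymm hbpos u hu l
end

section
/- For every σ ∈ ℝ^n_+, the matrix 𝓕(σ) − F(σ) is positive semidefinite, i.e., the true-solution measurement matrix dominates the Galerkin-approximated measurement matrix in the Loewner order. -/
/-!
The Galerkin errors `eⱼ = u_σ^{lⱼ} - ũ_σ^{lⱼ}` are `b_σ`-orthogonal to `V`, and `ũ_σ^{lₖ} ∈ V`,
so `lₖ(eⱼ) = b_σ(u_σ^{lₖ}, eⱼ) = b_σ(eₖ, eⱼ)`. Hence `𝓕(σ) - F(σ)` is the Gram matrix of the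
errors with respect to `b_σ`, which is a positive semidefinite form when all `σᵢ > 0`.
-/

open scoped Matrix

namespace LinearMap.BilinForm

section Gram

variable {R M ι : Type*} [CommRing R] [AddCommGroup M] [Module R M]

def gram (B : LinearMap.BilinForm R M) (e : ι → M) : Matrix ι ι R :=
  Matrix.of fun i j => B (e i) (e j)

@[simp]
theorem gram_apply (B : LinearMap.BilinForm R M) (e : ι → M) (i j : ι) :
    B.gram e i j = B (e i) (e j) :=
  rfl

variable [StarRing R] [TrivialStar R] [Fintype ι]

theorem star_dotProduct_gram_mulVec (B : LinearMap.BilinForm R M) (e : ι → M) (x : ι → R) :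
    star x ⬝ᵥ (B.gram e *ᵥ x) = B (∑ i, x i • e i) (∑ j, x j • e j) := by
  simp only [dotProduct, Matrix.mulVec, gram_apply, Pi.star_apply, star_trivial, map_sum, map_smul,
    LinearMap.sum_apply, LinearMap.smul_apply, smul_eq_mul, Finset.mul_sum]
  rw [Finset.sum_comm]
  exact Finset.sum_congr rfl fun i _ => Finset.sum_congr rfl fun j _ => by ring

theorem IsPosSemidef.posSemidef_gram [PartialOrder R] {B : LinearMap.BilinForm R M}
    (hB : B.IsPosSemidef) (e : ι → M) : (B.gram e).PosSemidef := by
  refine .of_dotProduct_mulVec_nonneg ?_ fun x => ?_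
  · ext i j
    simp [hB.isSymm.eq (e i) (e j)]
  · rw [star_dotProduct_gram_mulVec]
    exact hB.isNonneg.nonneg _

end Gram

variable {R M : Type*} [CommRing R] [AddCommGroup M] [Module R M]

theorem IsPosSemidef.sum [Preorder R] [AddLeftMono R] {ι : Type*} {s : Finset ι}
    {B : ι → LinearMap.BilinForm R M} (hB : ∀ i ∈ s, (B i).IsPosSemidef) :
    (∑ i ∈ s, B i).IsPosSemidef :=
  Finset.sum_induction B IsPosSemidef (fun _ _ => IsPosSemidef.add) isPosSemidef_zero hB

section Galerkin

variable {B : LinearMap.BilinForm R M} {V : Submodule R M}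

theorem galerkin_orthogonality {f : M →ₗ[R] R} {u ut : M} (hu : ∀ v, B u v = f v)
    (hut : ∀ v ∈ V, B ut v = f v) {v : M} (hv : v ∈ V) : B (u - ut) v = 0 := by
  rw [LinearMap.map_sub₂, hu, hut v hv, sub_self]

theorem apply_sub_eq_of_galerkin (hB : B.IsSymm) {f g : M →ₗ[R] R} {uf utf ug utg : M}
    (huf : ∀ v, B uf v = f v) (hutf : utf ∈ V) (hug : ∀ v, B ug v = g v)
    (hutg : ∀ v ∈ V, B utg v = g v) :
    f ug - f utg = B (uf - utf) (ug - utg) := by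
  have horth : B utf (ug - utg) = 0 := by
    rw [hB.eq, galerkin_orthogonality hug hutg hutf]
  rw [LinearMap.map_sub₂, huf, horth, sub_zero, map_sub]

end Galerkin

end LinearMap.BilinForm

theorem ContinuousLinearMap.isPosSemidef_toLinearMap₁₂ {E : Type*} [TopologicalSpace E]
    [AddCommGroup E] [Module ℝ E] {b : E →L[ℝ] E →L[ℝ] ℝ} (hsymm : ∀ u v, b u v = b v u) (hpos : ∀ v, 0 ≤ b v v) :
    LinearMap.BilinForm.IsPosSemidef b.toLinearMap₁₂ :=
  ⟨⟨hsymm⟩, ⟨hpos⟩⟩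

theorem stmt_17_general
    {H : Type*} [NormedAddCommGroup H] [InnerProductSpace ℝ H]
    {n m : ℕ}
    (b0 : H →L[ℝ] H →L[ℝ] ℝ) (b : Fin n → H →L[ℝ] H →L[ℝ] ℝ)
    (hb0symm : ∀ u v : H, b0 u v = b0 v u)
    (hb0pos : ∀ v : H, 0 ≤ b0 v v)
    (hbsymm : ∀ i, ∀ u v : H, b i u v = b i v u)
    (hbpos : ∀ i, ∀ v : H, 0 ≤ b i v v)
    (u : (Fin n → ℝ) → (H →L[ℝ] ℝ) → H)
    (hu : ∀ σ : Fin n → ℝ, (∀ i, 0 < σ i) → ∀ l : H →L[ℝ] ℝ,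
      ∀ v : H, b0 (u σ l) v + ∑ i, σ i * b i (u σ l) v = l v)
    (V : Submodule ℝ H)
    (ut : (Fin n → ℝ) → (H →L[ℝ] ℝ) → H)
    (hmem : ∀ σ l, ut σ l ∈ V)
    (hut : ∀ σ : Fin n → ℝ, (∀ i, 0 < σ i) → ∀ l : H →L[ℝ] ℝ,
      ∀ v ∈ V, b0 (ut σ l) v + ∑ i, σ i * b i (ut σ l) v = l v)
    (l : Fin m → (H →L[ℝ] ℝ)) :
    ∀ σ : Fin n → ℝ, (∀ i, 0 < σ i) →
      Matrix.PosSemidef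
        (Matrix.of fun j k : Fin m => l k (u σ (l j)) - l k (ut σ (l j))) := by
  intro σ hσ
  set B : LinearMap.BilinForm ℝ H := b0.toLinearMap₁₂ + ∑ i, σ i • (b i).toLinearMap₁₂
  have hBapply (x y : H) : B x y = b0 x y + ∑ i, σ i * b i x y := by simp [B]
  have hB : B.IsPosSemidef :=
    (ContinuousLinearMap.isPosSemidef_toLinearMap₁₂ hb0symm hb0pos).add <|
      LinearMap.BilinForm.IsPosSemidef.sum fun i _ =>
        (ContinuousLinearMap.isPosSemidef_toLinearMap₁₂ (hbsymm i) (hbpos i)).smul (hσ i).le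
  have hgram : (Matrix.of fun j k : Fin m => l k (u σ (l j)) - l k (ut σ (l j))) =
      B.gram fun j => u σ (l j) - ut σ (l j) := by
    ext j k
    rw [Matrix.of_apply, LinearMap.BilinForm.gram_apply, hB.isSymm.eq]
    exact LinearMap.BilinForm.apply_sub_eq_of_galerkin (f := (l k : H →ₗ[ℝ] ℝ)) hB.isSymm
      (fun v => (hBapply _ v).trans (hu σ hσ (l k) v)) (hmem σ (l k))
      (fun v => (hBapply _ v).trans (hu σ hσ (l j) v))
      (fun v hv => (hBapply _ v).trans (hut σ hσ (l j) v hv))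
  rw [hgram]
  exact hB.posSemidef_gram _

/-- For every `σ ∈ ℝ^n_+`, the matrix `𝓕(σ) − F(σ)` is positive
semidefinite, i.e., the true-solution measurement matrix dominates the
Galerkin-approximated measurement matrix in the Loewner order. -/
theorem stmt_17
    {H : Type*} [NormedAddCommGroup H] [InnerProductSpace ℝ H] [CompleteSpace H]
    {n m : ℕ}
    (b0 : H →L[ℝ] H →L[ℝ] ℝ) (b : Fin n → H →L[ℝ] H →L[ℝ] ℝ)
    (hb0symm : ∀ u v : H, b0 u v = b0 v u)
    (hb0pos : ∀ v : H, 0 ≤ b0 v v)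
    (hbsymm : ∀ i, ∀ u v : H, b i u v = b i v u)
    (hbpos : ∀ i, ∀ v : H, 0 ≤ b i v v)
    (C β : ℝ) (hβ : 0 < β) (hCβ : β ≤ C)
    (hcoer : ∀ v : H, β * ‖v‖ ^ 2 ≤ b0 v v + ∑ i, b i v v)
    (hbound : ∀ v : H, b0 v v + ∑ i, b i v v ≤ C * ‖v‖ ^ 2)
    (u : (Fin n → ℝ) → (H →L[ℝ] ℝ) → H)
    (hu : ∀ σ : Fin n → ℝ, (∀ i, 0 < σ i) → ∀ l : H →L[ℝ] ℝ,
      ∀ v : H, b0 (u σ l) v + ∑ i, σ i * b i (u σ l) v = l v)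
    (V : Submodule ℝ H) [FiniteDimensional ℝ V]
    (ut : (Fin n → ℝ) → (H →L[ℝ] ℝ) → H)
    (hmem : ∀ σ l, ut σ l ∈ V)
    (hut : ∀ σ : Fin n → ℝ, (∀ i, 0 < σ i) → ∀ l : H →L[ℝ] ℝ,
      ∀ v ∈ V, b0 (ut σ l) v + ∑ i, σ i * b i (ut σ l) v = l v)
    (l : Fin m → (H →L[ℝ] ℝ)) :
    ∀ σ : Fin n → ℝ, (∀ i, 0 < σ i) →
      Matrix.PosSemidef
        (Matrix.of fun j k : Fin m => l k (u σ (l j)) - l k (ut σ (l j))) :=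
  stmt_17_general b0 b hb0symm hb0pos hbsymm hbpos u hu V ut hmem hut l
end
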